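/- Every simple outerplanar graph with maximum degree Δ has incidence chromatic number at most Δ + 3. -/

import Mathlib

/-!
Outerplanar graphs are 2-degenerate. Place the vertices on a line so that no two edges cross.
If every vertex of a finite set `s` had three neighbours in `s`, pick an edge `ab` whose span
contains a vertex of `s`, with as few such vertices as possible. A vertex `z` inside the span has
all its neighbours in `[a, b]`, since no edge crosses `ab`, and two of them on the same side of
`z`; the outer one spans a strictly smaller nonempty part of `s`.

A `k`-degenerate graph has a `(Δ + 2k - 1, k)`-incidence colouring, extended one vertex `v` of
degree at most `k` at a time. The incidences `(v, u)` are coloured first, reusing a colour already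
entering `u` whenever possible, so that at most `k` colours enter every vertex; then each `(u, v)`
has to avoid at most `(Δ - 1) + k + k - 1` colours, the colour of `(v, u)` being counted both
among those leaving `v` and among those entering `u`.
-/

/-- An incidence of `G` is a pair `(v, vw)` with `G.Adj v w`, encoded as the ordered pair
`(v, w)`.  Two incidences `(v, vw)` and `(v', v'w')` are adjacent if `v = v'`, `w = v'`
or `v = w'`.  A `(k, l)`-incidence coloring is a proper coloring of the incidences with at
most `k` colors such that for every vertex `v` at most `l` colors appear on the incoming
incidences `(u, uv)`. -/
def IsIncColoring {V : Type*} (G : SimpleGraph V) (k l : ℕ) (c : V → V → Fin k) : Prop :=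
  (∀ v w v' w' : V, G.Adj v w → G.Adj v' w' → (v, w) ≠ (v', w') →
      (v = v' ∨ w = v' ∨ v = w') → c v w ≠ c v' w') ∧
  (∀ v : V, {x : Fin k | ∃ u, G.Adj u v ∧ c u v = x}.ncard ≤ l)

/-- `G` has a `(k, l)`-incidence coloring. -/
def HasIncColoring {V : Type*} (G : SimpleGraph V) (k l : ℕ) : Prop :=
  ∃ c : V → V → Fin k, IsIncColoring G k l c

/-- A graph is outerplanar iff it has a one-page book embedding: the vertices can be placed
(injectively) on a line so that no two edges interleave. -/
def Outerplanar {V : Type*} (G : SimpleGraph V) : Prop :=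
  ∃ f : V → ℝ, Function.Injective f ∧
    ∀ a b c d : V, G.Adj a b → G.Adj c d →
      ¬(f a < f c ∧ f c < f b ∧ f b < f d)

/-- A proper incidence coloring of G with k colors: adjacent incidences get different
colors.  (The incidence chromatic number of G is at most k iff such a coloring exists.) -/
def HasProperIncColoring {V : Type*} (G : SimpleGraph V) (k : ℕ) : Prop :=
  ∃ c : V → V → Fin k, ∀ v w v' w' : V, G.Adj v w → G.Adj v' w' → (v, w) ≠ (v', w') →
    (v = v' ∨ w = v' ∨ v = w') → c v w ≠ c v' w'

open Finset

lemma mem_uIoo_of_three_ne {α : Type*} [LinearOrder α] {x p q r : α} (hp : p ≠ x) (hq : q ≠ x)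
    (hr : r ≠ x) (hpq : p ≠ q) (hpr : p ≠ r) (hqr : q ≠ r) :
    p ∈ Set.uIoo x q ∨ q ∈ Set.uIoo x p ∨ p ∈ Set.uIoo x r ∨ r ∈ Set.uIoo x p ∨
      q ∈ Set.uIoo x r ∨ r ∈ Set.uIoo x q := by
  simp only [Set.uIoo, Set.mem_Ioo]
  grind

lemma Finset.image_update_of_notMem {α β : Type*} [DecidableEq α] [DecidableEq β] {s : Finset α}
    {a : α} (ha : a ∉ s) (f : α → β) (b : β) : s.image (Function.update f a b) = s.image f :=
  image_congr fun _ hx => Function.update_of_ne (ne_of_mem_of_not_mem hx ha) b f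

namespace SimpleGraph

variable {V : Type*}

section Degeneracy

variable (G : SimpleGraph V)

def Degenerate [DecidableRel G.Adj] (k : ℕ) : Prop :=
  ∀ s : Finset V, s.Nonempty → ∃ v ∈ s, #{w ∈ s | G.Adj v w} ≤ k

def IsBookEmbedding {α : Type*} [LinearOrder α] (f : V → α) : Prop :=
  Function.Injective f ∧
    ∀ a b c d : V, G.Adj a b → G.Adj c d → ¬(f a < f c ∧ f c < f b ∧ f b < f d)

variable {G} {α : Type*} [LinearOrder α] {f : V → α}

lemma IsBookEmbedding.mem_uIcc_of_mem_uIoo (hf : G.IsBookEmbedding f) {a b z w : V}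
    (hab : G.Adj a b) (hz : f z ∈ Set.uIoo (f a) (f b)) (hzw : G.Adj z w) :
    f w ∈ Set.uIcc (f a) (f b) := by
  wlog hle : f a ≤ f b generalizing a b
  · rw [Set.uIoo_comm] at hz
    rw [Set.uIcc_comm]
    exact this hab.symm hz (le_of_not_ge hle)
  rw [Set.uIoo_of_le hle] at hz
  rw [Set.uIcc_of_le hle]
  constructor
  · by_contra! hwa
    exact hf.2 w z a b hzw.symm hab ⟨hwa, hz.1, hz.2⟩
  · by_contra! hbw
    exact hf.2 a b z w hab hzw ⟨hz.1, hz.2, hbw⟩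

lemma exists_adj_adj_mem_uIoo [DecidableRel G.Adj] (hf : Function.Injective f) {s : Finset V}
    {c : V} (hc : 2 < #{w ∈ s | G.Adj c w}) :
    ∃ y ∈ s, ∃ y' ∈ s, G.Adj c y ∧ G.Adj c y' ∧ f y' ∈ Set.uIoo (f c) (f y) := by
  obtain ⟨p, hp, q, hq, r, hr, hpq, hpr, hqr⟩ := two_lt_card.1 hc
  simp only [mem_filter] at hp hq hr
  have hne {y : V} (hy : G.Adj c y) : f y ≠ f c := hf.ne hy.ne'
  rcases mem_uIoo_of_three_ne (hne hp.2) (hne hq.2) (hne hr.2) (hf.ne hpq) (hf.ne hpr)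
    (hf.ne hqr) with h | h | h | h | h | h
  exacts [⟨q, hq.1, p, hp.1, hq.2, hp.2, h⟩, ⟨p, hp.1, q, hq.1, hp.2, hq.2, h⟩,
    ⟨r, hr.1, p, hp.1, hr.2, hp.2, h⟩, ⟨p, hp.1, r, hr.1, hp.2, hr.2, h⟩,
    ⟨r, hr.1, q, hq.1, hr.2, hq.2, h⟩, ⟨q, hq.1, r, hr.1, hq.2, hr.2, h⟩]

theorem IsBookEmbedding.degenerate [DecidableRel G.Adj] (hf : G.IsBookEmbedding f) :
    G.Degenerate 2 := by
  classical
  intro s ⟨c, hc⟩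
  by_contra! hdeg
  let inner (e : V × V) : Finset V := {z ∈ s | f z ∈ Set.uIoo (f e.1) (f e.2)}
  let E : Finset (V × V) := {e ∈ s ×ˢ s | G.Adj e.1 e.2 ∧ (inner e).Nonempty}
  have exists_mem_E {x : V} (hx : x ∈ s) : ∃ y, (x, y) ∈ E := by
    obtain ⟨y, hy, y', hy', hxy, -, hy'y⟩ := exists_adj_adj_mem_uIoo hf.1 (hdeg x hx)
    exact ⟨y, mem_filter.2 ⟨mem_product.2 ⟨hx, hy⟩, hxy, y',
      mem_filter.2 ⟨hy', hy'y⟩⟩⟩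
  obtain ⟨y, hy⟩ := exists_mem_E hc
  obtain ⟨⟨a, b⟩, hab, hmin⟩ := E.exists_min_image (fun e => #(inner e)) ⟨_, hy⟩
  obtain ⟨-, hab, z, hz⟩ := mem_filter.1 hab
  obtain ⟨hzs, hzab⟩ := mem_filter.1 hz
  obtain ⟨w, hw⟩ := exists_mem_E hzs
  have hsub : inner (z, w) ⊆ (inner (a, b)).erase z := by
    have hwab := hf.mem_uIcc_of_mem_uIoo hab hzab (mem_filter.1 hw).2.1
    intro x hx
    obtain ⟨hxs, hxzw⟩ := mem_filter.1 hx
    refine mem_erase.2 ⟨?_, mem_filter.2 ⟨hxs, ?_⟩⟩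
    · rintro rfl
      exact Set.left_notMem_uIoo hxzw
    · exact Set.uIoo_subset_Ioo (Set.uIoo_subset_uIcc_self hzab) hwab hxzw
  exact (hmin _ hw).not_gt ((card_le_card hsub).trans_lt (card_erase_lt_of_mem hz))

theorem _root_.Outerplanar.degenerate [DecidableRel G.Adj] (h : Outerplanar G) :
    G.Degenerate 2 :=
  let ⟨_, hf⟩ := h
  IsBookEmbedding.degenerate hf

end Degeneracy

section IncidenceColoring

def IncAdj (p q : V × V) : Prop := p.1 = q.1 ∨ p.2 = q.1 ∨ p.1 = q.2

lemma IncAdj.symm {p q : V × V} (h : IncAdj p q) : IncAdj q p := by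
  unfold IncAdj at *
  grind

def incidencesOn (G : SimpleGraph V) [DecidableRel G.Adj] (s : Finset V) : Finset (V × V) :=
  {p ∈ s ×ˢ s | G.Adj p.1 p.2}

@[simp] lemma mem_incidencesOn {G : SimpleGraph V} [DecidableRel G.Adj] {s : Finset V}
    {p : V × V} : p ∈ G.incidencesOn s ↔ p.1 ∈ s ∧ p.2 ∈ s ∧ G.Adj p.1 p.2 := by
  simp [incidencesOn, and_assoc]

variable [DecidableEq V] {m k : ℕ}

lemma incidencesOn_insert {G : SimpleGraph V} [DecidableRel G.Adj] (s : Finset V) (v : V) :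
    G.incidencesOn (insert v s) = G.incidencesOn s ∪ {u ∈ s | G.Adj v u}.image (Prod.mk v) ∪
      {u ∈ s | G.Adj v u}.image (·, v) := by
  ext ⟨x, y⟩
  simp only [mem_incidencesOn, mem_insert, mem_union, mem_image, mem_filter, Prod.mk.injEq]
  grind [G.adj_comm, SimpleGraph.irrefl]

def inColors (D : Finset (V × V)) (c : V × V → Fin m) (v : V) : Finset (Fin m) :=
  {p ∈ D | p.2 = v}.image c

def outColors (D : Finset (V × V)) (c : V × V → Fin m) (v : V) : Finset (Fin m) :=
  {p ∈ D | p.1 = v}.image c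

structure IsIncColoringOn (D : Finset (V × V)) (k : ℕ) (c : V × V → Fin m) : Prop where
  ne_of_incAdj : ∀ p ∈ D, ∀ q ∈ D, p ≠ q → IncAdj p q → c p ≠ c q
  card_inColors_le : ∀ v, #(inColors D c v) ≤ k

variable {D : Finset (V × V)} {c : V × V → Fin m}

lemma IsIncColoringOn.update_insert (hc : IsIncColoringOn D k c) {p : V × V} (hp : p ∉ D)
    {a : Fin m} (ha : ∀ q ∈ D, IncAdj p q → c q ≠ a)
    (hin : a ∈ inColors D c p.2 ∨ #(inColors D c p.2) < k) :
    IsIncColoringOn (insert p D) k (Function.update c p a) := by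
  have hupd {q : V × V} (hq : q ∈ D) : Function.update c p a q = c q :=
    Function.update_of_ne (ne_of_mem_of_not_mem hq hp) a c
  constructor
  · intro q₁ hq₁ q₂ hq₂ hne hadj
    rw [mem_insert] at hq₁ hq₂
    rcases hq₁ with rfl | hq₁ <;> rcases hq₂ with rfl | hq₂
    · exact absurd rfl hne
    · rw [Function.update_self, hupd hq₂]
      exact (ha q₂ hq₂ hadj).symm
    · rw [Function.update_self, hupd hq₁]
      exact ha q₁ hq₁ hadj.symm
    · rw [hupd hq₁, hupd hq₂]
      exact hc.ne_of_incAdj q₁ hq₁ q₂ hq₂ hne hadj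
  · intro v
    unfold inColors at hin ⊢
    rw [filter_insert]
    split_ifs with hv
    · rw [image_insert, Function.update_self,
        image_update_of_notMem (fun h => hp (mem_filter.1 h).1)]
      subst hv
      rcases hin with hin | hin
      · rw [insert_eq_of_mem hin]
        exact hc.card_inColors_le _
      · exact (card_insert_le _ _).trans hin
    · rw [image_update_of_notMem (fun h => hp (mem_filter.1 h).1)]
      exact hc.card_inColors_le v

lemma IsIncColoringOn.disjoint_inColors_outColors {G : SimpleGraph V}
    (hD : ∀ p ∈ D, G.Adj p.1 p.2) (hc : IsIncColoringOn D k c) (u : V) :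
    Disjoint (inColors D c u) (outColors D c u) := by
  rw [Finset.disjoint_left]
  rintro _ hin hout
  obtain ⟨p, hp, rfl⟩ := mem_image.1 hin
  obtain ⟨q, hq, hqp⟩ := mem_image.1 hout
  obtain ⟨hpD, hpu⟩ := mem_filter.1 hp
  obtain ⟨hqD, hqu⟩ := mem_filter.1 hq
  refine hc.ne_of_incAdj p hpD q hqD ?_ (Or.inr (Or.inl (hpu.trans hqu.symm))) hqp.symm
  rintro rfl
  exact (hD p hpD).ne (hqu.trans hpu.symm)

lemma exists_notMem_union_and_mem_or_card_lt (R P T : Finset (Fin m)) (hTR : Disjoint T R)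
    (hRP : #R + #P < m) (hP : #P < k) : ∃ a ∉ R ∪ P, a ∈ T ∨ #T < k := by
  by_cases hTP : T ⊆ P
  · obtain ⟨a, -, ha⟩ := exists_mem_notMem_of_card_lt_card (s := R ∪ P) (t := univ)
      (by rw [card_univ, Fintype.card_fin]; exact (card_union_le R P).trans_lt hRP)
    exact ⟨a, ha, Or.inr ((card_le_card hTP).trans_lt hP)⟩
  · obtain ⟨a, haT, haP⟩ := not_subset.1 hTP
    exact ⟨a, by simp [haP, Finset.disjoint_left.1 hTR haT], Or.inl haT⟩

variable [Fintype V] {G : SimpleGraph V} [DecidableRel G.Adj]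

lemma card_filter_fst_lt_maxDegree (hD : ∀ p ∈ D, G.Adj p.1 p.2) {u v : V} (huv : G.Adj u v)
    (huvD : (u, v) ∉ D) : #{p ∈ D | p.1 = u} < G.maxDegree := by
  have hle : #{p ∈ D | p.1 = u} ≤ #((G.neighborFinset u).erase v) := by
    refine card_le_card_of_injOn Prod.snd (fun p hp => ?_) (fun p hp q hq hpq => ?_)
    · obtain ⟨hpD, rfl⟩ := mem_filter.1 hp
      refine mem_erase.2 ⟨fun h => huvD ?_, (G.mem_neighborFinset _ _).2 (hD p hpD)⟩
      rwa [← h]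
    · exact Prod.ext ((mem_filter.1 hp).2.trans (mem_filter.1 hq).2.symm) hpq
  rw [card_erase_of_mem ((G.mem_neighborFinset _ _).2 huv), card_neighborFinset_eq_degree] at hle
  have := G.degree_le_maxDegree u
  have := G.degree_pos_iff_exists_adj u |>.2 ⟨v, huv⟩
  omega

lemma IsIncColoringOn.exists_insert_out (hD : ∀ p ∈ D, G.Adj p.1 p.2)
    (hc : IsIncColoringOn D k c) {v u : V} (hvu : G.Adj v u) (hvuD : (v, u) ∉ D)
    (huvD : (u, v) ∉ D) (hv : ∀ p ∈ D, p.2 ≠ v) (hout : #{p ∈ D | p.1 = v} < k)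
    (hm : G.maxDegree + k ≤ m + 1) :
    ∃ a, IsIncColoringOn (insert (v, u) D) k (Function.update c (v, u) a) := by
  have hR : #(outColors D c u) < G.maxDegree :=
    card_image_le.trans_lt (card_filter_fst_lt_maxDegree hD hvu.symm huvD)
  have hP : #(outColors D c v) < k := card_image_le.trans_lt hout
  obtain ⟨a, ha, hin⟩ := exists_notMem_union_and_mem_or_card_lt (outColors D c u)
    (outColors D c v) (inColors D c u) (hc.disjoint_inColors_outColors hD u) (by omega) hP
  refine ⟨a, hc.update_insert hvuD ?_ hin⟩
  rintro q hq (h | h | h) rfl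
  · exact ha (mem_union_right _ (mem_image_of_mem c (mem_filter.2 ⟨hq, h.symm⟩)))
  · exact ha (mem_union_left _ (mem_image_of_mem c (mem_filter.2 ⟨hq, h.symm⟩)))
  · exact hv q hq h.symm

lemma IsIncColoringOn.exists_insert_in (hD : ∀ p ∈ D, G.Adj p.1 p.2)
    (hc : IsIncColoringOn D k c) {u v : V} (huv : G.Adj u v) (huvD : (u, v) ∉ D)
    (hvuD : (v, u) ∈ D) (hout : #{p ∈ D | p.1 = v} ≤ k) (hin : #{p ∈ D | p.2 = v} < k)
    (hm : G.maxDegree + 2 * k ≤ m + 1) :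
    ∃ a, IsIncColoringOn (insert (u, v) D) k (Function.update c (u, v) a) := by
  set R := outColors D c u
  set P := outColors D c v
  set T := inColors D c u
  have hPT : c (v, u) ∈ P ∩ T :=
    mem_inter.2 ⟨mem_image_of_mem c (mem_filter.2 ⟨hvuD, rfl⟩),
      mem_image_of_mem c (mem_filter.2 ⟨hvuD, rfl⟩)⟩
  have hcard : #(R ∪ (P ∪ T)) < m := by
    have := card_union_le R (P ∪ T)
    have := card_union_add_card_inter P T
    have := card_pos.2 ⟨_, hPT⟩
    have : #R < G.maxDegree := card_image_le.trans_lt (card_filter_fst_lt_maxDegree hD huv huvD)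
    have : #P ≤ k := card_image_le.trans hout
    have : #T ≤ k := hc.card_inColors_le u
    omega
  obtain ⟨a, -, ha⟩ := exists_mem_notMem_of_card_lt_card (s := R ∪ (P ∪ T)) (t := univ)
    (by rwa [card_univ, Fintype.card_fin])
  refine ⟨a, hc.update_insert huvD ?_ (Or.inr (card_image_le.trans_lt hin))⟩
  rintro q hq hadj rfl
  apply ha
  rcases hadj with h | h | h
  · exact mem_union_left _ (mem_image_of_mem c (mem_filter.2 ⟨hq, h.symm⟩))
  · exact mem_union_right _ (mem_union_left _ (mem_image_of_mem c (mem_filter.2 ⟨hq, h.symm⟩)))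
  · exact mem_union_right _ (mem_union_right _ (mem_image_of_mem c (mem_filter.2 ⟨hq, h.symm⟩)))

lemma IsIncColoringOn.exists_extend_outgoing {s : Finset V}
    (hc : IsIncColoringOn (G.incidencesOn s) k c) {v : V} (hv : v ∉ s)
    (hdeg : #{u ∈ s | G.Adj v u} ≤ k) (hm : G.maxDegree + k ≤ m + 1) :
    ∃ c' : V × V → Fin m,
      IsIncColoringOn (G.incidencesOn s ∪ {u ∈ s | G.Adj v u}.image (Prod.mk v)) k c' := by
  set N := {u ∈ s | G.Adj v u}
  have hN {u : V} (hu : u ∈ N) : u ∈ s ∧ G.Adj v u := mem_filter.1 hu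
  refine Finset.induction_on' N ⟨c, by simpa using hc⟩ ?_
  rintro u A hu hA huA ⟨c', hc'⟩
  have hAN : #A < #N := card_lt_card ((ssubset_iff_of_subset hA).2 ⟨u, hu, huA⟩)
  have hD : ∀ p ∈ G.incidencesOn s ∪ A.image (Prod.mk v), p.2 ∈ s ∧ G.Adj p.1 p.2 := by
    simp only [mem_union, mem_incidencesOn, mem_image]
    rintro p (⟨-, h⟩ | ⟨w, hw, rfl⟩)
    exacts [h, hN (hA hw)]
  have hfst :
      {p ∈ G.incidencesOn s ∪ A.image (Prod.mk v) | p.1 = v} ⊆ A.image (Prod.mk v) := by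
    intro p
    simp only [mem_filter, mem_union, mem_incidencesOn]
    rintro ⟨⟨h, -⟩ | h, rfl⟩
    exacts [absurd h hv, h]
  obtain ⟨a, ha⟩ := hc'.exists_insert_out (fun p hp => (hD p hp).2) (hN hu).2
    (by simp [hv, huA]) (fun h => hv (hD _ h).1) (fun p hp h => hv (h ▸ (hD p hp).1))
    ((card_le_card hfst).trans_lt (card_image_le.trans_lt (hAN.trans_le hdeg))) hm
  rw [image_insert, union_insert]
  exact ⟨_, ha⟩

lemma IsIncColoringOn.exists_extend_incoming {s : Finset V} {v : V}
    (hc : IsIncColoringOn (G.incidencesOn s ∪ {u ∈ s | G.Adj v u}.image (Prod.mk v)) k c)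
    (hv : v ∉ s) (hdeg : #{u ∈ s | G.Adj v u} ≤ k) (hm : G.maxDegree + 2 * k ≤ m + 1) :
    ∃ c' : V × V → Fin m, IsIncColoringOn (G.incidencesOn s ∪
      {u ∈ s | G.Adj v u}.image (Prod.mk v) ∪ {u ∈ s | G.Adj v u}.image (·, v)) k c' := by
  set N := {u ∈ s | G.Adj v u}
  have hN {u : V} (hu : u ∈ N) : u ∈ s ∧ G.Adj v u := mem_filter.1 hu
  have hvN : v ∉ N := fun h => hv (hN h).1
  refine Finset.induction_on' (motive := fun B => ∃ c' : V × V → Fin m, IsIncColoringOn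
      (G.incidencesOn s ∪ N.image (Prod.mk v) ∪ B.image (·, v)) k c')
    N ⟨c, by simpa using hc⟩ ?_
  rintro u B hu hB huB ⟨c', hc'⟩
  have hBN : #B < #N := card_lt_card ((ssubset_iff_of_subset hB).2 ⟨u, hu, huB⟩)
  have hD :
      ∀ p ∈ G.incidencesOn s ∪ N.image (Prod.mk v) ∪ B.image (·, v), G.Adj p.1 p.2 := by
    simp only [mem_union, mem_incidencesOn, mem_image]
    rintro p ((⟨-, -, h⟩ | ⟨w, hw, rfl⟩) | ⟨w, hw, rfl⟩)
    exacts [h, (hN hw).2, (hN (hB hw)).2.symm]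
  have hfst : {p ∈ G.incidencesOn s ∪ N.image (Prod.mk v) ∪ B.image (·, v) | p.1 = v} ⊆
      N.image (Prod.mk v) := by
    intro p
    simp only [mem_filter, mem_union, mem_incidencesOn, mem_image]
    rintro ⟨(⟨h, -⟩ | h) | ⟨w, hw, rfl⟩, hpv⟩
    exacts [absurd (hpv ▸ h) hv, h, absurd (hpv ▸ (hN (hB hw)).1) hv]
  have hsnd : {p ∈ G.incidencesOn s ∪ N.image (Prod.mk v) ∪ B.image (·, v) | p.2 = v} ⊆
      B.image (·, v) := by
    intro p
    simp only [mem_filter, mem_union, mem_incidencesOn, mem_image]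
    rintro ⟨(⟨-, h, -⟩ | ⟨w, hw, rfl⟩) | h, hpv⟩
    exacts [absurd (hpv ▸ h) hv, absurd (hpv ▸ (hN hw).1) hv, h]
  obtain ⟨a, ha⟩ := hc'.exists_insert_in hD (hN hu).2.symm (by simp [hv, huB, hvN])
    (mem_union_left _ (mem_union_right _ (mem_image_of_mem _ hu)))
    ((card_le_card hfst).trans (card_image_le.trans hdeg))
    ((card_le_card hsnd).trans_lt (card_image_le.trans_lt (hBN.trans_le hdeg))) hm
  rw [image_insert, union_insert]
  exact ⟨_, ha⟩

lemma IsIncColoringOn.exists_insert_vertex {s : Finset V}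
    (hc : IsIncColoringOn (G.incidencesOn s) k c) {v : V} (hv : v ∉ s)
    (hdeg : #{u ∈ s | G.Adj v u} ≤ k) (hm : G.maxDegree + 2 * k ≤ m + 1) :
    ∃ c' : V × V → Fin m, IsIncColoringOn (G.incidencesOn (insert v s)) k c' := by
  obtain ⟨c₁, hc₁⟩ := hc.exists_extend_outgoing hv hdeg (by omega)
  rw [incidencesOn_insert]
  exact hc₁.exists_extend_incoming hv hdeg hm

theorem Degenerate.exists_isIncColoringOn (hG : G.Degenerate k) (hk : 0 < k) (s : Finset V) :
    ∃ c : V × V → Fin (G.maxDegree + 2 * k - 1), IsIncColoringOn (G.incidencesOn s) k c := by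
  induction s using Finset.strongInduction with
  | H s ih =>
    obtain rfl | hs := s.eq_empty_or_nonempty
    · exact ⟨fun _ => ⟨0, by omega⟩, by constructor <;> simp [incidencesOn, inColors]⟩
    obtain ⟨v, hv, hdeg⟩ := hG s hs
    obtain ⟨c, hc⟩ := ih (s.erase v) (erase_ssubset hv)
    rw [← insert_erase hv]
    exact hc.exists_insert_vertex (notMem_erase v s)
      ((card_le_card (filter_subset_filter _ (erase_subset v s))).trans hdeg) (by omega)

theorem Degenerate.hasIncColoring (hG : G.Degenerate k) (hk : 0 < k) :
    HasIncColoring G (G.maxDegree + 2 * k - 1) k := by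
  obtain ⟨c, hc⟩ := hG.exists_isIncColoringOn hk univ
  refine ⟨fun v w => c (v, w), fun v w v' w' h h' hne hadj =>
    hc.ne_of_incAdj _ (by simpa using h) _ (by simpa using h') hne hadj, fun v => ?_⟩
  have : {x | ∃ u, G.Adj u v ∧ c (u, v) = x} = ↑(inColors (G.incidencesOn univ) c v) := by
    ext
    simp [inColors]
  rw [this, Set.ncard_coe_finset]
  exact hc.card_inColors_le v

end IncidenceColoring

end SimpleGraph

/-- Every simple outerplanar graph has incidence chromatic number at most Δ + 3. -/
theorem stmt_14 {V : Type*} [Fintype V] (G : SimpleGraph V) [DecidableRel G.Adj]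
    (hout : Outerplanar G) : HasProperIncColoring G (G.maxDegree + 3) := by
  classical
  obtain ⟨c, hc, -⟩ := hout.degenerate.hasIncColoring two_pos
  exact ⟨c, hc⟩
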